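/- Let s and e be composable labelled transition systems, ℓ ∈ (L_s ∩ L_e) ∪ {δ}, p1, p2 ∈ Q_s and q1, q2 ∈ Q_e. If p1 —ℓ→ p2 and q1 —ℓ→ q2, then p1 ‖ q1 —ℓ→ p2 ‖ q2. -/

import Mathlib

/-- Visible labels extended with the quiescence label `δ`. -/
inductive DLabel (A : Type) where
  | act : A → DLabel A
  | δ : DLabel A
deriving DecidableEq

/-- A labelled transition system with state type `S` and label type `A`.
`T p none p'` is an internal (τ) transition; `T p (some a) p'` a visible one.
The set of states is the whole type `S`; the initial state is `q0`. -/
structure LTS (S : Type) (A : Type) where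
  T : S → Option A → S → Prop
  I : Set A
  U : Set A
  q0 : S

namespace LTS

variable {S E F A : Type}

/-- The set of visible labels. -/
def L (s : LTS S A) : Set A := s.I ∪ s.U

/-- Well-formedness of an LTS: countably many states and labels, inputs and
outputs disjoint, and visible transitions labelled in `I ∪ U`. -/
def WF (s : LTS S A) : Prop :=
  Countable S ∧ s.I.Countable ∧ s.U.Countable ∧ Disjoint s.I s.U ∧
    ∀ p a q, s.T p (some a) q → a ∈ s.L

/-- A state is quiescent if it has no output transitions and no τ-transitions. -/
def quiescent (s : LTS S A) (p : S) : Prop :=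
  (∀ x ∈ s.U, ∀ p', ¬ s.T p (some x) p') ∧ (∀ p', ¬ s.T p none p')

/-- Single-step transition relation for δ-extended labels: `δ` is a self-loop
on quiescent states. -/
def dstep (s : LTS S A) (p : S) : DLabel A → S → Prop
  | .act a, p' => s.T p (some a) p'
  | .δ, p' => p = p' ∧ s.quiescent p

/-- `eps p p'`: `p'` is reachable from `p` by finitely many τ-transitions. -/
def eps (s : LTS S A) : S → S → Prop :=
  Relation.ReflTransGen (fun p q => s.T p none q)

/-- Weak transition relation `p ⟹σ p'` over δ-extended traces. -/
def wtrans (s : LTS S A) : S → List (DLabel A) → S → Prop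
  | p, [], p' => s.eps p p'
  | p, ℓ :: σ, p'' => ∃ p1 p2, s.eps p p1 ∧ s.dstep p1 ℓ p2 ∧ s.wtrans p2 σ p''

/-- The δ-extended label set `L^δ` as a set of `DLabel`s. -/
def Ld (s : LTS S A) : Set (DLabel A) := (DLabel.act '' s.L) ∪ {DLabel.δ}

/-- `Utraces s`: δ-extended traces of `s` (from the initial state) that never
pass through a state refusing a subsequent input of the trace. -/
def Utraces (s : LTS S A) : Set (List (DLabel A)) :=
  { σ | (∀ ℓ ∈ σ, ℓ ∈ s.Ld) ∧ (∃ p, s.wtrans s.q0 σ p) ∧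
      ∀ σ1 a σ2, σ = σ1 ++ DLabel.act a :: σ2 → a ∈ s.I →
        ∀ p, s.wtrans s.q0 σ1 p → ∃ p', s.wtrans p [DLabel.act a] p' }

/-- `out p`: the outputs (including quiescence δ) enabled in state `p`. -/
def out (s : LTS S A) (p : S) : Set (DLabel A) :=
  { x | match x with
        | .act a => a ∈ s.U ∧ ∃ p', s.T p (some a) p'
        | .δ => s.quiescent p }

/-- `out` of a set of states. -/
def outSet (s : LTS S A) (P : Set S) : Set (DLabel A) := ⋃ p ∈ P, s.out p

/-- `inp p`: the inputs weakly enabled in state `p`. -/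
def inp (s : LTS S A) (p : S) : Set A :=
  { a | a ∈ s.I ∧ ∃ p', s.wtrans p [DLabel.act a] p' }

/-- The states reached from the initial state after trace `σ`. -/
def after (s : LTS S A) (σ : List (DLabel A)) : Set S :=
  { p' | s.wtrans s.q0 σ p' }

/-- Input-enabledness: every input is weakly enabled in every state. -/
def IOTS (s : LTS S A) : Prop :=
  ∀ q : S, ∀ a ∈ s.I, ∃ q', s.wtrans q [DLabel.act a] q'

/-- Two LTSs are composable iff their output sets are disjoint. -/
def Composable (s : LTS S A) (e : LTS E A) : Prop := Disjoint s.U e.U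

/-- Parallel composition of two LTSs: synchronisation on shared labels,
interleaving on non-shared labels and τ. -/
def par (s : LTS S A) (e : LTS E A) : LTS (S × E) A where
  I := (s.I \ e.U) ∪ (e.I \ s.U)
  U := s.U ∪ e.U
  q0 := (s.q0, e.q0)
  T := fun x ℓ y =>
    (s.T x.1 ℓ y.1 ∧ y.2 = x.2 ∧ (ℓ = none ∨ ∃ a ∈ s.L, ℓ = some a) ∧
      ∀ a ∈ e.L, ℓ ≠ some a) ∨
    (e.T x.2 ℓ y.2 ∧ y.1 = x.1 ∧ (ℓ = none ∨ ∃ a ∈ e.L, ℓ = some a) ∧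
      ∀ a ∈ s.L, ℓ ≠ some a) ∨
    (∃ a ∈ s.L ∩ e.L, ℓ = some a ∧ s.T x.1 (some a) y.1 ∧ e.T x.2 (some a) y.2)

/-- The uioco implementation relation. -/
def uioco (i : LTS E A) (s : LTS S A) : Prop :=
  ∀ σ ∈ s.Utraces, i.outSet (i.after σ) ⊆ s.outSet (s.after σ)

/-- `s.Accepts e`: along every Utrace of `s ‖ e`, every output of `e` that is an
input label of `s` is actually accepted by `s` and is an output of `e`. -/
def Accepts (s : LTS S A) (e : LTS E A) : Prop :=
  ∀ σ ∈ (s.par e).Utraces, ∀ p q, (s.par e).wtrans (s.par e).q0 σ (p, q) →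
    ∀ a, DLabel.act a ∈ e.out q → a ∈ s.I → a ∈ s.inp p ∧ a ∈ e.U

/-- Mutual acceptance. -/
def MutuallyAccepts (s : LTS S A) (e : LTS E A) : Prop := s.Accepts e ∧ e.Accepts s

/-- Isomorphism of LTSs: equal label sets and a bijection on states preserving
the initial state and all transitions (including τ and δ). -/
def Isomorphic (s : LTS S A) (s' : LTS E A) : Prop :=
  s.I = s'.I ∧ s.U = s'.U ∧ ∃ f : S ≃ E, f s.q0 = s'.q0 ∧
    (∀ p p' ℓ, s.T p ℓ p' ↔ s'.T (f p) ℓ (f p')) ∧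
    (∀ p p', s.dstep p DLabel.δ p' ↔ s'.dstep (f p) DLabel.δ (f p'))

open Classical in
/-- Projection of a trace onto a set of labels. -/
noncomputable def proj : List (DLabel A) → Set (DLabel A) → List (DLabel A)
  | [], _ => []
  | ℓ :: σ, 𝓛 => if ℓ ∈ 𝓛 then ℓ :: proj σ 𝓛 else proj σ 𝓛

end LTS

namespace LTS

variable {S E A : Type} {s : LTS S A} {e : LTS E A}

theorem par_T_of_sync {a : A} (ha : a ∈ s.L ∩ e.L) {p p' : S} {q q' : E}
    (hp : s.T p (some a) p') (hq : e.T q (some a) q') :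
    (s.par e).T (p, q) (some a) (p', q') :=
  Or.inr (Or.inr ⟨a, ha, rfl, hp, hq⟩)

theorem exists_T_of_par_T_none {x y : S × E} (h : (s.par e).T x none y) :
    s.T x.1 none y.1 ∨ e.T x.2 none y.2 := by
  rcases h with ⟨hs, -⟩ | ⟨he, -⟩ | ⟨_, _, hb, -⟩
  · exact Or.inl hs
  · exact Or.inr he
  · cases hb

/-- An output step of `s ‖ e` is an output step of one of the components: a label
local to one component is not a label of the other, hence an output of the first. -/
theorem exists_T_of_par_T_output {x y : S × E} {a : A} (ha : a ∈ (s.par e).U)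
    (h : (s.par e).T x (some a) y) :
    (a ∈ s.U ∧ s.T x.1 (some a) y.1) ∨ (a ∈ e.U ∧ e.T x.2 (some a) y.2) := by
  rcases h with ⟨hs, -, -, hne⟩ | ⟨he, -, -, hne⟩ | ⟨b, -, hb, hs, he⟩
  · rcases ha with ha | ha
    · exact Or.inl ⟨ha, hs⟩
    · exact absurd rfl (hne a (Or.inr ha))
  · rcases ha with ha | ha
    · exact absurd rfl (hne a (Or.inr ha))
    · exact Or.inr ⟨ha, he⟩
  · obtain rfl := Option.some_injective _ hb
    rcases ha with ha | ha
    · exact Or.inl ⟨ha, hs⟩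
    · exact Or.inr ⟨ha, he⟩

theorem quiescent_par {p : S} {q : E} (hp : s.quiescent p) (hq : e.quiescent q) :
    (s.par e).quiescent (p, q) := by
  refine ⟨fun a ha y h => ?_, fun y h => ?_⟩
  · rcases exists_T_of_par_T_output ha h with ⟨ha, hs⟩ | ⟨ha, he⟩
    · exact hp.1 a ha _ hs
    · exact hq.1 a ha _ he
  · rcases exists_T_of_par_T_none h with hs | he
    · exact hp.2 _ hs
    · exact hq.2 _ he

end LTS

theorem par_step_of_both_general {S E A : Type} (s : LTS S A) (e : LTS E A)
    (ℓ : DLabel A) (hℓ : (∃ a ∈ s.L ∩ e.L, ℓ = DLabel.act a) ∨ ℓ = DLabel.δ)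
    (p1 p2 : S) (q1 q2 : E)
    (h1 : s.dstep p1 ℓ p2) (h2 : e.dstep q1 ℓ q2) :
    (s.par e).dstep (p1, q1) ℓ (p2, q2) := by
  rcases hℓ with ⟨a, ha, rfl⟩ | rfl
  · exact LTS.par_T_of_sync ha h1 h2
  · obtain ⟨rfl, hp⟩ := h1
    obtain ⟨rfl, hq⟩ := h2
    exact ⟨rfl, LTS.quiescent_par hp hq⟩

/-- for composable `s`, `e` and a shared label or δ, synchronised
steps of both components yield a step of the composition. -/
theorem par_step_of_both {S E A : Type} (s : LTS S A) (e : LTS E A)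
    (hs : s.WF) (he : e.WF) (hc : LTS.Composable s e)
    (ℓ : DLabel A) (hℓ : (∃ a ∈ s.L ∩ e.L, ℓ = DLabel.act a) ∨ ℓ = DLabel.δ)
    (p1 p2 : S) (q1 q2 : E)
    (h1 : s.dstep p1 ℓ p2) (h2 : e.dstep q1 ℓ q2) :
    (s.par e).dstep (p1, q1) ℓ (p2, q2) :=
  par_step_of_both_general s e ℓ hℓ p1 p2 q1 q2 h1 h2
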